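/- Let (α_t)_{t≥1} be a sequence of random variables adapted to a filtration (F_t)_{t≥0} with 0 ≤ α_t ≤ R almost surely for all t, where R > 0. Then for all δ ∈ (0,1), with probability at least 1 − δ, for all n ≥ 1: Σ_{t=1}^n α_t ≥ (1 − 1/e)·Σ_{t=1}^n E[α_t | F_{t-1}] − R·log(1/δ). -/

import Mathlib

open MeasureTheory Finset
open scoped ProbabilityTheory

/-- Convexity bound: for `x ∈ [0,1]`, `exp (-x) ≤ 1 - (1 - 1/e) * x`. -/
lemma exp_neg_le_aux {x : ℝ} (hx0 : 0 ≤ x) (hx1 : x ≤ 1) :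
    Real.exp (-x) ≤ 1 - (1 - 1 / Real.exp 1) * x := by
  have h := convexOn_exp.2 (Set.mem_univ (-1 : ℝ)) (Set.mem_univ (0 : ℝ))
    hx0 (by linarith : (0:ℝ) ≤ 1 - x) (by ring)
  simp only [smul_eq_mul, mul_zero, add_zero, mul_neg, mul_one, Real.exp_zero] at h
  have : Real.exp (-1) = 1 / Real.exp 1 := by
    rw [Real.exp_neg, one_div]
  rw [this] at h
  calc Real.exp (-x) ≤ x * (1 / Real.exp 1) + (1 - x) := h
    _ = 1 - (1 - 1 / Real.exp 1) * x := by ring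

/-- Finite-horizon Ville inequality for nonnegative supermartingales. -/
lemma ville_aux {Ω : Type*} {m0 : MeasurableSpace Ω} {μ : Measure Ω} [IsFiniteMeasure μ]
    {F : Filtration ℕ m0} {f : ℕ → Ω → ℝ} (hf : Supermartingale f F μ)
    (hnonneg : ∀ n ω, 0 ≤ f n ω) {ε : ℝ} (hε : 0 < ε) (n : ℕ) :
    ε * (μ {ω | ∃ k ≤ n, ε ≤ f k ω}).toReal ≤ μ[f 0] := by
  set τ : Ω → ℕ∞ := fun ω => ((hittingBtwn f (Set.Ici ε) 0 n ω : ℕ) : ℕ∞) with hτdef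
  have hτ : IsStoppingTime F τ :=
    hf.stronglyAdapted.adapted.isStoppingTime_hittingBtwn measurableSet_Ici
  have hτ_le : ∀ ω, τ ω ≤ n := fun ω => Nat.cast_le.2 (hittingBtwn_le ω)
  have hint : Integrable (stoppedValue f τ) μ :=
    integrable_stoppedValue ℕ hτ hf.integrable hτ_le
  set A := {ω | ∃ k ≤ n, ε ≤ f k ω} with hAdef
  have hA : MeasurableSet A := by
    have : A = ⋃ k ∈ Set.Iic n, {ω | ε ≤ f k ω} := by
      ext ω; simp [hAdef]
    rw [this]
    refine MeasurableSet.biUnion (Set.to_countable _) fun k _ => ?_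
    exact measurableSet_le measurable_const
      ((hf.stronglyMeasurable k).measurable.le (F.le k))
  have h1 : ∀ ω ∈ A, ε ≤ stoppedValue f τ ω := by
    intro ω hω
    obtain ⟨k, hkn, hk⟩ := hω
    have : stoppedValue f τ ω ∈ Set.Ici ε := by
      refine stoppedValue_hittingBtwn_mem ?_
      exact ⟨k, Set.mem_Icc.2 ⟨Nat.zero_le _, hkn⟩, hk⟩
    exact this
  have step1 : ε * (μ A).toReal ≤ ∫ ω in A, stoppedValue f τ ω ∂μ :=
    by have := setIntegral_ge_of_const_le hA (measure_ne_top _ _) h1 hint.integrableOn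
       rwa [smul_eq_mul, mul_comm, measureReal_def] at this
  have step2 : ∫ ω in A, stoppedValue f τ ω ∂μ ≤ μ[stoppedValue f τ] :=
    setIntegral_le_integral hint
      (Filter.Eventually.of_forall fun ω => hnonneg _ _)
  have step3 : μ[stoppedValue f τ] ≤ μ[f 0] := by
    have h := hf.neg.expected_stoppedValue_mono (isStoppingTime_const F 0) hτ
      (fun ω => by change ((0 : ℕ) : ℕ∞) ≤ τ ω; simp [τ]) hτ_le
    have e1 : stoppedValue (-f) (fun _ => (WithTop.some (0 : ℕ) : ℕ∞)) = -(f 0) := stoppedValue_const (-f) 0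
    have e2 : stoppedValue (-f) τ = -(stoppedValue f τ) := rfl
    rw [e1, e2] at h
    simp only [Pi.neg_apply, integral_neg] at h
    linarith
  linarith

/-- Ville's maximal inequality for nonnegative supermartingales. -/
lemma ville {Ω : Type*} {m0 : MeasurableSpace Ω} {μ : Measure Ω} [IsFiniteMeasure μ]
    {F : Filtration ℕ m0} {f : ℕ → Ω → ℝ} (hf : Supermartingale f F μ)
    (hnonneg : ∀ n ω, 0 ≤ f n ω) {ε : ℝ} (hε : 0 < ε) :
    μ {ω | ∃ k, ε ≤ f k ω} ≤ ENNReal.ofReal (μ[f 0] / ε) := by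
  have hU : {ω | ∃ k, ε ≤ f k ω} = ⋃ n, {ω | ∃ k ≤ n, ε ≤ f k ω} := by
    ext ω
    simp only [Set.mem_setOf_eq, Set.mem_iUnion]
    exact ⟨fun ⟨k, hk⟩ => ⟨k, k, le_rfl, hk⟩, fun ⟨n, k, _, hk⟩ => ⟨k, hk⟩⟩
  rw [hU]
  have hmono : Monotone fun n => {ω | ∃ k ≤ n, ε ≤ f k ω} := by
    intro a b hab ω ⟨k, hk, h⟩
    exact ⟨k, hk.trans hab, h⟩
  rw [hmono.directed_le.measure_iUnion]
  refine iSup_le fun n => ?_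
  rw [ENNReal.le_ofReal_iff_toReal_le (measure_ne_top _ _)
    (div_nonneg ?_ hε.le)]
  · rw [le_div_iff₀ hε, mul_comm]
    exact ville_aux hf hnonneg hε n
  · exact integral_nonneg fun ω => hnonneg _ _

/-- Time-uniform lower-tail concentration for sums of bounded nonnegative adapted
random variables. -/
theorem adapted_sum_concentration {Ω : Type*} {m : MeasurableSpace Ω}
    (μ : Measure Ω) [IsProbabilityMeasure μ] (F : Filtration ℕ m)
    (R : ℝ) (hR : 0 < R) (α : ℕ → Ω → ℝ)
    (hadapt : ∀ t, 1 ≤ t → StronglyMeasurable[F t] (α t))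
    (hbdd : ∀ t, 1 ≤ t → ∀ᵐ ω ∂μ, α t ω ∈ Set.Icc (0 : ℝ) R)
    (δ : ℝ) (hδ0 : 0 < δ) (hδ1 : δ < 1) :
    ENNReal.ofReal (1 - δ) ≤
      μ {ω | ∀ n, 1 ≤ n →
        (1 - 1 / Real.exp 1) * (∑ t ∈ Finset.Icc 1 n, (μ[α t|F (t - 1)]) ω)
          - R * Real.log (1 / δ) ≤ ∑ t ∈ Finset.Icc 1 n, α t ω} := by
  classical
  set c : ℝ := 1 - 1 / Real.exp 1 with hcdef
  have hexp1 : (1 : ℝ) < Real.exp 1 := by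
    have := Real.add_one_le_exp (1 : ℝ)
    linarith
  have hc0 : 0 < c := by
    have : 1 / Real.exp 1 < 1 := by
      rw [div_lt_one (by positivity)]; exact hexp1
    simp only [hcdef]; linarith
  have hc1 : c < 1 := by
    have : 0 < 1 / Real.exp 1 := by positivity
    simp only [hcdef]; linarith
  set β : ℕ → Ω → ℝ := fun t => μ[α t|F (t - 1)] with hβdef
  set S : ℕ → Ω → ℝ := fun n ω => Real.exp (∑ t ∈ Finset.Icc 1 n, (c * β t ω - α t ω) / R)
    with hSdef
  -- basic facts
  have hαint : ∀ t, 1 ≤ t → Integrable (α t) μ := by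
    intro t ht
    refine Integrable.mono' (integrable_const R)
      ((hadapt t ht).mono (F.le t)).aestronglyMeasurable ?_
    filter_upwards [hbdd t ht] with ω hω
    rw [Real.norm_eq_abs, abs_le]
    exact ⟨by linarith [hω.1, hR], hω.2⟩
  have hβmeas : ∀ t, StronglyMeasurable[F (t - 1)] (β t) := fun t => stronglyMeasurable_condExp
  have hβbdd : ∀ t, 1 ≤ t → ∀ᵐ ω ∂μ, β t ω ∈ Set.Icc (0 : ℝ) R := by
    intro t ht
    have h0 : 0 ≤ᵐ[μ] β t := condExp_nonneg <| by
      filter_upwards [hbdd t ht] with ω hω using hω.1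
    have hR' : β t ≤ᵐ[μ] μ[(fun _ => R)|F (t - 1)] :=
      condExp_mono (hαint t ht) (integrable_const R) <| by
        filter_upwards [hbdd t ht] with ω hω using hω.2
    rw [condExp_const (F.le _)] at hR'
    filter_upwards [h0, hR'] with ω h1 h2 using ⟨h1, h2⟩
  -- global a.e. good event
  have hgood : ∀ᵐ ω ∂μ, ∀ t, 1 ≤ t → α t ω ∈ Set.Icc (0 : ℝ) R ∧ β t ω ∈ Set.Icc (0 : ℝ) R := by
    rw [ae_all_iff]
    intro t
    by_cases ht : 1 ≤ t
    · filter_upwards [hbdd t ht, hβbdd t ht] with ω h1 h2 using fun _ => ⟨h1, h2⟩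
    · filter_upwards with ω h using absurd h ht
  -- measurability of S n
  have hSmeas : ∀ n, StronglyMeasurable[F n] (S n) := by
    intro n
    refine Real.continuous_exp.comp_stronglyMeasurable ?_
    refine Finset.stronglyMeasurable_fun_sum _ fun t htm => ?_
    rw [Finset.mem_Icc] at htm
    have hβ : StronglyMeasurable[F n] (β t) :=
      (hβmeas t).mono (F.mono (by omega))
    have hα : StronglyMeasurable[F n] (α t) :=
      (hadapt t htm.1).mono (F.mono htm.2)
    exact (((hβ.measurable.const_mul c).sub hα.measurable).div_const R).stronglyMeasurable
  -- a.e. bound on S n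
  have hSbdd : ∀ n, ∀ᵐ ω ∂μ, S n ω ≤ Real.exp n := by
    intro n
    filter_upwards [hgood] with ω hω
    rw [hSdef]
    simp only [Real.exp_le_exp]
    calc ∑ t ∈ Finset.Icc 1 n, (c * β t ω - α t ω) / R
        ≤ ∑ t ∈ Finset.Icc 1 n, 1 := by
          refine Finset.sum_le_sum fun t htm => ?_
          rw [Finset.mem_Icc] at htm
          obtain ⟨⟨hα0, hαR⟩, ⟨hβ0, hβR⟩⟩ := hω t htm.1
          rw [div_le_one hR]
          nlinarith
      _ = (n : ℝ) * 1 := by simp [Nat.card_Icc]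
      _ ≤ n := by simp
  have hSint : ∀ n, Integrable (S n) μ := by
    intro n
    refine Integrable.mono' (integrable_const (Real.exp n))
      ((hSmeas n).mono (F.le n)).aestronglyMeasurable ?_
    filter_upwards [hSbdd n] with ω hω
    rw [Real.norm_eq_abs, abs_of_pos (Real.exp_pos _)]
    exact hω
  -- supermartingale property
  have hSsup : Supermartingale S F μ := by
    refine supermartingale_nat (fun n => hSmeas n) hSint fun n => ?_
    set h1 : Ω → ℝ := fun ω => S n ω * Real.exp (c * β (n + 1) ω / R) with h1def
    set h2 : Ω → ℝ := fun ω => Real.exp (-(α (n + 1) ω / R)) with h2def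
    have hsplit : S (n + 1) = h1 * h2 := by
      funext ω
      rw [hSdef, h1def, h2def]
      simp only [Pi.mul_apply]
      have he : (c * β (n + 1) ω - α (n + 1) ω) / R
          = c * β (n + 1) ω / R + -(α (n + 1) ω / R) := by ring
      rw [Finset.sum_Icc_succ_top (by omega : 1 ≤ n + 1), he, ← add_assoc,
        Real.exp_add, Real.exp_add]
    have h1meas : StronglyMeasurable[F n] h1 := by
      have : StronglyMeasurable[F n] (β (n + 1)) := by
        have := hβmeas (n + 1)
        simpa using this
      exact (hSmeas n).mul
        (Real.continuous_exp.comp_stronglyMeasurable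
          (((this.measurable.const_mul c).div_const R).stronglyMeasurable))
    have h2int : Integrable h2 μ := by
      refine Integrable.mono' (integrable_const (Real.exp 1))
        ?_ ?_
      · refine (Real.continuous_exp.comp_stronglyMeasurable ?_).aestronglyMeasurable
        exact ((((hadapt (n + 1) (by omega)).mono
          (F.le _)).measurable.div_const R).neg).stronglyMeasurable
      · filter_upwards [hbdd (n + 1) (by omega)] with ω hω
        rw [Real.norm_eq_abs, abs_of_pos (Real.exp_pos _), Real.exp_le_exp]
        have : 0 ≤ α (n + 1) ω / R := div_nonneg hω.1 hR.le
        linarith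
    have h12int : Integrable (h1 * h2) μ := hsplit ▸ hSint (n + 1)
    have hpull : μ[S (n + 1)|F n] =ᵐ[μ] h1 * μ[h2|F n] := by
      rw [hsplit]
      exact condExp_mul_of_stronglyMeasurable_left h1meas h12int h2int
    -- conditional bound on h2
    have hptwise : h2 ≤ᵐ[μ] fun ω => 1 - c / R * α (n + 1) ω := by
      filter_upwards [hbdd (n + 1) (by omega)] with ω hω
      have hx0 : 0 ≤ α (n + 1) ω / R := div_nonneg hω.1 hR.le
      have hx1 : α (n + 1) ω / R ≤ 1 := (div_le_one hR).2 hω.2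
      have := exp_neg_le_aux hx0 hx1
      rw [h2def]
      calc Real.exp (-(α (n + 1) ω / R)) ≤ 1 - c * (α (n + 1) ω / R) := this
        _ = 1 - c / R * α (n + 1) ω := by ring
    have hlin_int : Integrable (fun ω => 1 - c / R * α (n + 1) ω) μ :=
      (integrable_const (1 : ℝ)).sub ((hαint (n + 1) (by omega)).const_mul _)
    have hcond2 : μ[h2|F n] ≤ᵐ[μ] fun ω => 1 - c / R * β (n + 1) ω := by
      have h1' : μ[h2|F n] ≤ᵐ[μ] μ[(fun ω => 1 - c / R * α (n + 1) ω)|F n] :=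
        condExp_mono h2int hlin_int hptwise
      have h2' : μ[(fun ω => 1 - c / R * α (n + 1) ω)|F n]
          =ᵐ[μ] fun ω => 1 - c / R * β (n + 1) ω := by
        have e : (fun ω => 1 - c / R * α (n + 1) ω)
            = (fun _ => (1 : ℝ)) - (c / R) • (α (n + 1)) := by
          funext ω; simp [smul_eq_mul]
        rw [e]
        have := condExp_sub (m := F n) (μ := μ) (integrable_const (1 : ℝ))
          ((hαint (n + 1) (by omega)).smul (c / R))
        refine this.trans ?_
        have hs := condExp_smul (m := F n) (μ := μ) (c / R) (α (n + 1))
        have hconst : μ[(fun _ => (1 : ℝ))|F n] = fun _ => (1 : ℝ) :=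
          condExp_const (F.le n) 1
        filter_upwards [hs] with ω hω
        have h1c : (μ[(fun _ => (1 : ℝ))|F n]) ω = 1 := by rw [hconst]
        simp only [Pi.sub_apply, h1c, hω, Pi.smul_apply, smul_eq_mul]
        rfl
      exact h1'.trans h2'.le
    -- combine
    refine hpull.trans_le ?_
    filter_upwards [hcond2] with ω hω
    simp only [Pi.mul_apply]
    have h1nn : 0 ≤ h1 ω := mul_nonneg (Real.exp_pos _).le (Real.exp_pos _).le
    calc h1 ω * (μ[h2|F n]) ω ≤ h1 ω * (1 - c / R * β (n + 1) ω) :=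
          mul_le_mul_of_nonneg_left hω h1nn
      _ ≤ h1 ω * Real.exp (-(c / R * β (n + 1) ω)) := by
          refine mul_le_mul_of_nonneg_left ?_ h1nn
          have := Real.add_one_le_exp (-(c / R * β (n + 1) ω))
          linarith
      _ = S n ω := by
          rw [h1def]
          rw [mul_assoc, ← Real.exp_add]
          have : c * β (n + 1) ω / R + -(c / R * β (n + 1) ω) = 0 := by ring
          rw [this, Real.exp_zero, mul_one]
  -- apply Ville with ε = 1/δ
  have hε : (0 : ℝ) < 1 / δ := by positivity
  have hS0 : μ[S 0] = 1 := by
    have : S 0 = fun _ => (1 : ℝ) := by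
      funext ω; rw [hSdef]; simp
    rw [this]
    simp
  have hville := ville hSsup (fun n ω => (Real.exp_pos _).le) hε
  rw [hS0] at hville
  have hbnd : μ {ω | ∃ k, 1 / δ ≤ S k ω} ≤ ENNReal.ofReal δ := by
    refine hville.trans ?_
    rw [one_div_one_div]
  set B := {ω | ∃ k, 1 / δ ≤ S k ω} with hBdef
  have hBmeas : MeasurableSet B := by
    rw [hBdef]
    have : {ω | ∃ k, 1 / δ ≤ S k ω} = ⋃ k, {ω | 1 / δ ≤ S k ω} := by
      ext ω; simp
    rw [this]
    exact MeasurableSet.iUnion fun k =>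
      measurableSet_le measurable_const (((hSmeas k).mono (F.le k)).measurable)
  -- Bᶜ is contained in the target event
  have hsub : Bᶜ ⊆ {ω | ∀ n, 1 ≤ n →
      (1 - 1 / Real.exp 1) * (∑ t ∈ Finset.Icc 1 n, (μ[α t|F (t - 1)]) ω)
        - R * Real.log (1 / δ) ≤ ∑ t ∈ Finset.Icc 1 n, α t ω} := by
    intro ω hω n hn
    simp only [hBdef, Set.mem_compl_iff, Set.mem_setOf_eq, not_exists, not_le] at hω
    have hlt := hω n
    rw [hSdef] at hlt
    have hlog : ∑ t ∈ Finset.Icc 1 n, (c * β t ω - α t ω) / R < Real.log (1 / δ) := by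
      by_contra h
      push_neg at h
      have := Real.exp_le_exp.2 h
      rw [Real.exp_log hε] at this
      linarith
    have hsum : ∑ t ∈ Finset.Icc 1 n, (c * β t ω - α t ω) / R
        = (c * ∑ t ∈ Finset.Icc 1 n, β t ω - ∑ t ∈ Finset.Icc 1 n, α t ω) / R := by
      rw [← Finset.sum_div, Finset.mul_sum, ← Finset.sum_sub_distrib]
    rw [hsum, div_lt_iff₀ hR] at hlog
    have : c * ∑ t ∈ Finset.Icc 1 n, β t ω - R * Real.log (1 / δ)
        ≤ ∑ t ∈ Finset.Icc 1 n, α t ω := by linarith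
    exact this
  calc ENNReal.ofReal (1 - δ) = 1 - ENNReal.ofReal δ := by
        rw [ENNReal.ofReal_sub 1 hδ0.le, ENNReal.ofReal_one]
    _ ≤ 1 - μ B := tsub_le_tsub_left hbnd 1
    _ = μ Bᶜ := (prob_compl_eq_one_sub hBmeas).symm
    _ ≤ _ := measure_mono hsub
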